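/- Let M be a perfect matching of the infinite grid graph on Z^2 and let p be a plaquette such that the four plaquettes q1 = p, q2 = p + 2e1, q3 = p + 2e2, q4 = p + 2e1 + 2e2 each host a parallel pair in M, with q1 and q4 hosting pairs of one orientation and q2 and q3 hosting pairs of the other orientation. Let M' be the perfect matching obtained from M by flipping all four of these plaquettes. Then for every height function h of M there exist δ in {4, −4} and a height function h' of M' such that h' − h equals δ at q1 and q4, equals −δ at q2 and q3, and equals 0 at every other plaquette. Consequently ∑_x (h'(x) − h(x)) = 0 and, for each coordinate a in {1,2}, ∑_x x_a (h'(x) − h(x)) = 0; i.e., the move conserves the total height and both first moments of the height field. -/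
import Mathlib


/-!
Dimer configurations (perfect matchings) on the infinite square grid `ℤ × ℤ` and their
height functions.

* A vertex is a point of `ℤ × ℤ`; the grid edge `(v, i)` joins `v` and `v + e i`, where
  `e 0 = (1,0)` and `e 1 = (0,1)`.
* A plaquette is a point `p : ℤ × ℤ`, regarded as the unit square with corners
  `p, p+e 0, p+e 1, p+e 0+e 1`.
* A height function for a perfect matching `M` assigns an integer to every plaquette so that
  crossing a grid edge, keeping the even endpoint of that edge on the right, the height
  increases by `1` across an unoccupied edge and decreases by `3` across an occupied one.
-/

open scoped Classical
noncomputable section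

namespace HQDM

/-- Vertices (and also plaquettes) of the infinite grid. -/
abbrev V : Type := ℤ × ℤ

/-- Grid edges: `(v, i)` is the edge joining `v` and `v + e i`. -/
abbrev E : Type := V × Fin 2

/-- The two unit vectors. -/
def e : Fin 2 → V := fun i => if i = 0 then (1, 0) else (0, 1)

/-- The endpoints of an edge. -/
def ends (ed : E) : Set V := {ed.1, ed.1 + e ed.2}

/-- `M` is a perfect matching of the grid graph: every vertex lies on exactly one edge of `M`. -/
def IsPM (M : Set E) : Prop := ∀ w : V, ∃! ed : E, ed ∈ M ∧ w ∈ ends ed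

/-- Sign of a vertex: `1` on even vertices, `-1` on odd ones. -/
def eps (v : V) : ℤ := if Even (v.1 + v.2) then 1 else -1

/-- `h : ℤ × ℤ → ℤ` is a height function for the matching `M`.  The two conditions encode, for
the horizontal edge `(v, 0)` (separating plaquette `v` above from plaquette `v - (0,1)` below)
and the vertical edge `(v, 1)` (separating plaquette `v` on the right from plaquette `v - (1,0)`
on the left), the rule: crossing a grid edge keeping its even endpoint on the right, the height
changes by `+1` across an unoccupied edge and by `-3` across an occupied one. -/
def IsHeight (M : Set E) (h : V → ℤ) : Prop :=
  ∀ v : V,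
    h (v - (0, 1)) - h v = (if (v, (0 : Fin 2)) ∈ M then (-3 : ℤ) else 1) * eps v ∧
    h (v - (1, 0)) - h v = (if (v, (1 : Fin 2)) ∈ M then (3 : ℤ) else -1) * eps v

/-- Plaquette `p` hosts a horizontal parallel dimer pair in `M`. -/
def HostsH (M : Set E) (p : V) : Prop :=
  (p, (0 : Fin 2)) ∈ M ∧ (p + (0, 1), (0 : Fin 2)) ∈ M

/-- Plaquette `p` hosts a vertical parallel dimer pair in `M`. -/
def HostsV (M : Set E) (p : V) : Prop :=
  (p, (1 : Fin 2)) ∈ M ∧ (p + (1, 0), (1 : Fin 2)) ∈ M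

/-- Plaquette `p` hosts a parallel pair (horizontal or vertical); i.e. `p` is flippable. -/
def HostsPar (M : Set E) (p : V) : Prop := HostsH M p ∨ HostsV M p

/-- The four boundary edges of the plaquette `p`. -/
def plaqEdges (p : V) : Set E :=
  {(p, (0 : Fin 2)), (p + (0, 1), (0 : Fin 2)), (p, (1 : Fin 2)), (p + (1, 0), (1 : Fin 2))}

/-- Flipping the plaquette `p`: the horizontal pair is replaced by the vertical one, or
vice versa (as a set operation, the symmetric difference with the plaquette's boundary). -/
def flip (M : Set E) (p : V) : Set E := symmDiff M (plaqEdges p)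

/-- `{p, p + 2 e i}` is a flippable pair of `M`: one of the two plaquettes hosts a horizontal
pair and the other a vertical pair. -/
def FlipPair (M : Set E) (p : V) (i : Fin 2) : Prop :=
  (HostsH M p ∧ HostsV M (p + e i + e i)) ∨ (HostsV M p ∧ HostsH M (p + e i + e i))

/-- The hQDM move at the pair `{p, p + 2 e i}`: both plaquettes are flipped. -/
def move (M : Set E) (p : V) (i : Fin 2) : Set E :=
  symmDiff M (plaqEdges p ∪ plaqEdges (p + e i + e i))

end HQDM

namespace HQDM

lemma mem_plaq0 (v q : V) : ((v,(0:Fin 2)) ∈ plaqEdges q) ↔ v = q ∨ v = q + (0,1) := by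
  simp [plaqEdges, Prod.ext_iff]

lemma mem_plaq1 (v q : V) : ((v,(1:Fin 2)) ∈ plaqEdges q) ↔ v = q ∨ v = q + (1,0) := by
  simp [plaqEdges, Prod.ext_iff]

lemma eps_shift_odd (q w : V) (hw : ¬ Even (w.1 + w.2)) : eps (q + w) = -eps q := by
  obtain ⟨a,b⟩ := q; obtain ⟨x,y⟩ := w
  simp only [eps, Prod.mk_add_mk, Int.even_iff] at *
  split <;> split <;> omega

lemma eps_shift_even (q w : V) (hw : Even (w.1 + w.2)) : eps (q + w) = eps q := by
  obtain ⟨a,b⟩ := q; obtain ⟨x,y⟩ := w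
  simp only [eps, Prod.mk_add_mk, Int.even_iff] at *
  split <;> split <;> omega

lemma pm_not_mem {M : Set E} (hM : IsPM M) {ed ed' : E} (h : ed ∈ M) (hne : ed ≠ ed')
    (w : V) (hw : w ∈ ends ed) (hw' : w ∈ ends ed') : ed' ∉ M := by
  intro hc
  obtain ⟨u, _, hu⟩ := hM w
  exact hne ((hu ed ⟨h, hw⟩).trans (hu ed' ⟨hc, hw'⟩).symm)

lemma mem_symmDiff_not {M A : Set E} {ed : E} (h : ed ∉ A) : ed ∈ symmDiff M A ↔ ed ∈ M := by
  simp [Set.mem_symmDiff, h]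

lemma hostsH_not {M : Set E} (hM : IsPM M) {q : V}
    (h1 : (q,(0:Fin 2)) ∈ M) :
    (q,(1:Fin 2)) ∉ M ∧ (q+(1,0),(1:Fin 2)) ∉ M := by
  constructor
  · exact pm_not_mem hM h1 (by simp [Prod.ext_iff]) q (by simp [ends]) (by simp [ends])
  · exact pm_not_mem hM h1 (by simp [Prod.ext_iff]) (q+(1,0))
      (by simp [ends, e]) (by simp [ends])

lemma hostsV_not {M : Set E} (hM : IsPM M) {q : V}
    (h1 : (q,(1:Fin 2)) ∈ M) :
    (q,(0:Fin 2)) ∉ M ∧ (q+(0,1),(0:Fin 2)) ∉ M := by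
  constructor
  · exact pm_not_mem hM h1 (by simp [Prod.ext_iff]) q (by simp [ends]) (by simp [ends])
  · exact pm_not_mem hM h1 (by simp [Prod.ext_iff]) (q+(0,1))
      (by simp [ends, e]) (by simp [ends])

lemma flip_height_H (M : Set E) (q : V)
    (h1 : (q,(0:Fin 2)) ∈ M) (h2 : (q+(0,1),(0:Fin 2)) ∈ M)
    (h3 : (q,(1:Fin 2)) ∉ M) (h4 : (q+(1,0),(1:Fin 2)) ∉ M)
    (h : V → ℤ) (hh : IsHeight M h) :
    IsHeight (symmDiff M (plaqEdges q)) (fun x => h x + if x = q then -4 * eps q else 0) := by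
  intro v
  constructor
  · by_cases hv : v = q
    · subst hv
      have H := (hh v).1
      have m1 : ((v,(0:Fin 2)) ∈ symmDiff M (plaqEdges v)) = False := by
        simp [Set.mem_symmDiff, mem_plaq0, h1]
      have n1 : (v - (0,1) = v) = False := by
        simp [sub_eq_self, Prod.ext_iff]
      simp only [m1, n1, if_false, if_true, if_pos rfl, h1] at *
      linarith
    · by_cases hv' : v = q + (0,1)
      · subst hv'
        have H := (hh (q + (0,1))).1
        have m1 : ((q + (0,1),(0:Fin 2)) ∈ symmDiff M (plaqEdges q)) = False := by
          simp [Set.mem_symmDiff, mem_plaq0, h2]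
        have c1 : (q + (0,1) - (0,1) : V) = q := add_sub_cancel_right q (0,1)
        have c2 : (q + (0,1) = q) = False := by
          simp [Prod.ext_iff]
        have e1 : eps (q + (0,1)) = -eps q := eps_shift_odd q (0,1) (by decide)
        simp only [m1, c1, c2, e1, if_false, if_pos rfl, h2, if_true] at *
        linarith
      · have H := (hh v).1
        have m1 : ((v,(0:Fin 2)) ∈ symmDiff M (plaqEdges q)) ↔ (v,(0:Fin 2)) ∈ M :=
          mem_symmDiff_not (by simp [mem_plaq0, hv, hv'])
        have n1 : (v - (0,1) = q) = False :=
          eq_false (fun hc => hv' (by rw [← hc]; ring))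
        have n2 : (v = q) = False := by simp [hv]
        simp only [m1, n1, n2, if_false] at *
        linarith
  · by_cases hv : v = q
    · subst hv
      have H := (hh v).2
      have m1 : ((v,(1:Fin 2)) ∈ symmDiff M (plaqEdges v)) = True := by
        simp [Set.mem_symmDiff, mem_plaq1, h3]
      have n1 : (v - (1,0) = v) = False := by
        simp [sub_eq_self, Prod.ext_iff]
      simp only [m1, n1, if_false, if_true, if_pos rfl, h3] at *
      linarith
    · by_cases hv' : v = q + (1,0)
      · subst hv'
        have H := (hh (q + (1,0))).2
        have m1 : ((q + (1,0),(1:Fin 2)) ∈ symmDiff M (plaqEdges q)) = True := by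
          simp [Set.mem_symmDiff, mem_plaq1, h4]
        have c1 : (q + (1,0) - (1,0) : V) = q := add_sub_cancel_right q (1,0)
        have c2 : (q + (1,0) = q) = False := by
          simp [Prod.ext_iff]
        have e1 : eps (q + (1,0)) = -eps q := eps_shift_odd q (1,0) (by decide)
        simp only [m1, c1, c2, e1, if_false, if_pos rfl, h4, if_true] at *
        linarith
      · have H := (hh v).2
        have m1 : ((v,(1:Fin 2)) ∈ symmDiff M (plaqEdges q)) ↔ (v,(1:Fin 2)) ∈ M :=
          mem_symmDiff_not (by simp [mem_plaq1, hv, hv'])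
        have n1 : (v - (1,0) = q) = False :=
          eq_false (fun hc => hv' (by rw [← hc]; ring))
        have n2 : (v = q) = False := by simp [hv]
        simp only [m1, n1, n2, if_false] at *
        linarith

lemma flip_height_V (M : Set E) (q : V)
    (h1 : (q,(1:Fin 2)) ∈ M) (h2 : (q+(1,0),(1:Fin 2)) ∈ M)
    (h3 : (q,(0:Fin 2)) ∉ M) (h4 : (q+(0,1),(0:Fin 2)) ∉ M)
    (h : V → ℤ) (hh : IsHeight M h) :
    IsHeight (symmDiff M (plaqEdges q)) (fun x => h x + if x = q then 4 * eps q else 0) := by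
  intro v
  constructor
  · by_cases hv : v = q
    · subst hv
      have H := (hh v).1
      have m1 : ((v,(0:Fin 2)) ∈ symmDiff M (plaqEdges v)) = True := by
        simp [Set.mem_symmDiff, mem_plaq0, h3]
      have n1 : (v - (0,1) = v) = False := by
        simp [sub_eq_self, Prod.ext_iff]
      simp only [m1, n1, if_false, if_true, if_pos rfl, h3] at *
      linarith
    · by_cases hv' : v = q + (0,1)
      · subst hv'
        have H := (hh (q + (0,1))).1
        have m1 : ((q + (0,1),(0:Fin 2)) ∈ symmDiff M (plaqEdges q)) = True := by
          simp [Set.mem_symmDiff, mem_plaq0, h4]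
        have c1 : (q + (0,1) - (0,1) : V) = q := add_sub_cancel_right q (0,1)
        have c2 : (q + (0,1) = q) = False := by simp [Prod.ext_iff]
        have e1 : eps (q + (0,1)) = -eps q := eps_shift_odd q (0,1) (by decide)
        simp only [m1, c1, c2, e1, if_false, if_pos rfl, h4, if_true] at *
        linarith
      · have H := (hh v).1
        have m1 : ((v,(0:Fin 2)) ∈ symmDiff M (plaqEdges q)) ↔ (v,(0:Fin 2)) ∈ M :=
          mem_symmDiff_not (by simp [mem_plaq0, hv, hv'])
        have n1 : (v - (0,1) = q) = False :=
          eq_false (fun hc => hv' (by rw [← hc]; ring))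
        have n2 : (v = q) = False := by simp [hv]
        simp only [m1, n1, n2, if_false] at *
        linarith
  · by_cases hv : v = q
    · subst hv
      have H := (hh v).2
      have m1 : ((v,(1:Fin 2)) ∈ symmDiff M (plaqEdges v)) = False := by
        simp [Set.mem_symmDiff, mem_plaq1, h1]
      have n1 : (v - (1,0) = v) = False := by
        simp [sub_eq_self, Prod.ext_iff]
      simp only [m1, n1, if_false, if_true, if_pos rfl, h1] at *
      linarith
    · by_cases hv' : v = q + (1,0)
      · subst hv'
        have H := (hh (q + (1,0))).2
        have m1 : ((q + (1,0),(1:Fin 2)) ∈ symmDiff M (plaqEdges q)) = False := by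
          simp [Set.mem_symmDiff, mem_plaq1, h2]
        have c1 : (q + (1,0) - (1,0) : V) = q := add_sub_cancel_right q (1,0)
        have c2 : (q + (1,0) = q) = False := by simp [Prod.ext_iff]
        have e1 : eps (q + (1,0)) = -eps q := eps_shift_odd q (1,0) (by decide)
        simp only [m1, c1, c2, e1, if_false, if_pos rfl, h2, if_true] at *
        linarith
      · have H := (hh v).2
        have m1 : ((v,(1:Fin 2)) ∈ symmDiff M (plaqEdges q)) ↔ (v,(1:Fin 2)) ∈ M :=
          mem_symmDiff_not (by simp [mem_plaq1, hv, hv'])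
        have n1 : (v - (1,0) = q) = False :=
          eq_false (fun hc => hv' (by rw [← hc]; ring))
        have n2 : (v = q) = False := by simp [hv]
        simp only [m1, n1, n2, if_false] at *
        linarith

lemma plaqEdges_disjoint {q q' : V}
    (h : q.1 + 2 ≤ q'.1 ∨ q'.1 + 2 ≤ q.1 ∨ q.2 + 2 ≤ q'.2 ∨ q'.2 + 2 ≤ q.2) :
    Disjoint (plaqEdges q) (plaqEdges q') := by
  rw [Set.disjoint_left]
  rintro ⟨⟨x,y⟩,i⟩ hA hB
  fin_cases i <;> simp [plaqEdges, Prod.ext_iff] at hA hB <;> omega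

lemma symmDiff_union_eq (M A B : Set E) (hd : Disjoint A B) :
    symmDiff M (A ∪ B) = symmDiff (symmDiff M A) B := by
  rw [symmDiff_assoc, hd.symmDiff_eq_sup]; rfl

lemma finsum_eq_four (w f : V → ℤ) (q1 q2 q3 q4 : V)
    (h12 : q1 ≠ q2) (h13 : q1 ≠ q3) (h14 : q1 ≠ q4)
    (h23 : q2 ≠ q3) (h24 : q2 ≠ q4) (h34 : q3 ≠ q4)
    (h0 : ∀ x, x ∉ ({q1, q2, q3, q4} : Set V) → f x = 0) :
    ∑ᶠ x : V, w x * f x = w q1 * f q1 + w q2 * f q2 + w q3 * f q3 + w q4 * f q4 := by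
  have hs : Function.support (fun x => w x * f x) ⊆ ↑({q1,q2,q3,q4} : Finset V) := by
    intro x hx
    by_contra hc
    apply hx
    have : f x = 0 := by
      apply h0
      intro hm
      apply hc
      simp only [Finset.coe_insert, Finset.coe_singleton] at *
      exact hm
    simp [this]
  rw [finsum_eq_sum_of_support_subset _ hs]
  rw [show ({q1,q2,q3,q4} : Finset V) = insert q1 (insert q2 (insert q3 {q4})) from rfl]
  rw [Finset.sum_insert (by simp [h12, h13, h14]),
    Finset.sum_insert (by simp [h23, h24]),
    Finset.sum_insert (by simp [h34]), Finset.sum_singleton]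
  ring

lemma config_preserved (M A : Set E) (q : V) (hd : Disjoint A (plaqEdges q)) :
    ((q,(0:Fin 2)) ∈ symmDiff M A ↔ (q,(0:Fin 2)) ∈ M) ∧
    ((q+(0,1),(0:Fin 2)) ∈ symmDiff M A ↔ (q+(0,1),(0:Fin 2)) ∈ M) ∧
    ((q,(1:Fin 2)) ∈ symmDiff M A ↔ (q,(1:Fin 2)) ∈ M) ∧
    ((q+(1,0),(1:Fin 2)) ∈ symmDiff M A ↔ (q+(1,0),(1:Fin 2)) ∈ M) :=
  ⟨mem_symmDiff_not (Set.disjoint_right.mp hd (by simp [plaqEdges])),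
   mem_symmDiff_not (Set.disjoint_right.mp hd (by simp [plaqEdges])),
   mem_symmDiff_not (Set.disjoint_right.mp hd (by simp [plaqEdges])),
   mem_symmDiff_not (Set.disjoint_right.mp hd (by simp [plaqEdges]))⟩


/-- Flipping the four plaquettes `q1 = p`, `q2 = p + 2e1`, `q3 = p + 2e2`,
`q4 = p + 2e1 + 2e2`, where `q1, q4` host parallel pairs of one orientation and `q2, q3` host
parallel pairs of the other orientation, changes the heights by `δ ∈ {4, -4}` at `q1, q4`, by
`-δ` at `q2, q3`, and by `0` elsewhere.  Consequently this move conserves the total height and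
both first moments of the height field. -/
theorem quadrupole_move_conserves_height_and_first_moments (M : Set E) (hM : IsPM M) (p : V)
    (hp : (HostsH M p ∧ HostsV M (p + (2, 0)) ∧ HostsV M (p + (0, 2)) ∧ HostsH M (p + (2, 2))) ∨
          (HostsV M p ∧ HostsH M (p + (2, 0)) ∧ HostsH M (p + (0, 2)) ∧ HostsV M (p + (2, 2))))
    (h : V → ℤ) (hh : IsHeight M h) :
    ∃ δ ∈ ({4, -4} : Set ℤ), ∃ h' : V → ℤ,
      IsHeight (symmDiff M (plaqEdges p ∪ plaqEdges (p + (2, 0)) ∪ plaqEdges (p + (0, 2)) ∪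
        plaqEdges (p + (2, 2)))) h' ∧
      h' p - h p = δ ∧
      h' (p + (2, 2)) - h (p + (2, 2)) = δ ∧
      h' (p + (2, 0)) - h (p + (2, 0)) = -δ ∧
      h' (p + (0, 2)) - h (p + (0, 2)) = -δ ∧
      (∀ x : V, x ∉ ({p, p + (2, 0), p + (0, 2), p + (2, 2)} : Set V) → h' x = h x) ∧
      (∑ᶠ x : V, (h' x - h x)) = 0 ∧
      (∑ᶠ x : V, x.1 * (h' x - h x)) = 0 ∧
      (∑ᶠ x : V, x.2 * (h' x - h x)) = 0 := by
  obtain ⟨a, b⟩ := p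
  simp only [Prod.mk_add_mk, add_zero] at hp ⊢
  have d12 : Disjoint (plaqEdges (a,b)) (plaqEdges (a+2,b)) :=
    plaqEdges_disjoint (Or.inl (by simp))
  have d13 : Disjoint (plaqEdges (a,b)) (plaqEdges (a,b+2)) :=
    plaqEdges_disjoint (Or.inr (Or.inr (Or.inl (by simp))))
  have d14 : Disjoint (plaqEdges (a,b)) (plaqEdges (a+2,b+2)) :=
    plaqEdges_disjoint (Or.inl (by simp))
  have d23 : Disjoint (plaqEdges (a+2,b)) (plaqEdges (a,b+2)) :=
    plaqEdges_disjoint (Or.inr (Or.inl (by simp)))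
  have d24 : Disjoint (plaqEdges (a+2,b)) (plaqEdges (a+2,b+2)) :=
    plaqEdges_disjoint (Or.inr (Or.inr (Or.inl (by simp))))
  have d34 : Disjoint (plaqEdges (a,b+2)) (plaqEdges (a+2,b+2)) :=
    plaqEdges_disjoint (Or.inl (by simp))
  have hEq : symmDiff M (plaqEdges (a,b) ∪ plaqEdges (a+2,b) ∪ plaqEdges (a,b+2) ∪
      plaqEdges (a+2,b+2)) =
      symmDiff (symmDiff (symmDiff (symmDiff M (plaqEdges (a,b))) (plaqEdges (a+2,b)))
        (plaqEdges (a,b+2))) (plaqEdges (a+2,b+2)) := by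
    rw [symmDiff_union_eq _ _ _
        (by rw [Set.disjoint_union_left, Set.disjoint_union_left]; exact ⟨⟨d14, d24⟩, d34⟩),
      symmDiff_union_eq _ _ _ (by rw [Set.disjoint_union_left]; exact ⟨d13, d23⟩),
      symmDiff_union_eq _ _ _ d12]
  have e2 : eps (a+2,b) = eps (a,b) := by
    simpa using eps_shift_even (a,b) (2,0) (by decide)
  have e3 : eps (a,b+2) = eps (a,b) := by
    simpa using eps_shift_even (a,b) (0,2) (by decide)
  have e4 : eps (a+2,b+2) = eps (a,b) := by
    simpa using eps_shift_even (a,b) (2,2) (by decide)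
  have ne12 : ((a,b) : V) ≠ (a+2,b) := by intro hc; rw [Prod.mk.injEq] at hc; omega
  have ne13 : ((a,b) : V) ≠ (a,b+2) := by intro hc; rw [Prod.mk.injEq] at hc; omega
  have ne14 : ((a,b) : V) ≠ (a+2,b+2) := by intro hc; rw [Prod.mk.injEq] at hc; omega
  have ne23 : ((a+2,b) : V) ≠ (a,b+2) := by intro hc; rw [Prod.mk.injEq] at hc; omega
  have ne24 : ((a+2,b) : V) ≠ (a+2,b+2) := by intro hc; rw [Prod.mk.injEq] at hc; omega
  have ne34 : ((a,b+2) : V) ≠ (a+2,b+2) := by intro hc; rw [Prod.mk.injEq] at hc; omega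
  rcases hp with ⟨⟨m1, m2⟩, ⟨m3, m4⟩, ⟨m5, m6⟩, ⟨m7, m8⟩⟩ |
    ⟨⟨m1, m2⟩, ⟨m3, m4⟩, ⟨m5, m6⟩, ⟨m7, m8⟩⟩
  · -- H at q1, q4; V at q2, q3
    have n1 := hostsH_not hM m1
    have n2 := hostsV_not hM m3
    have n3 := hostsV_not hM m5
    have n4 := hostsH_not hM m7
    have H1 := flip_height_H M (a,b) m1 m2 n1.1 n1.2 h hh
    have c2 := config_preserved M (plaqEdges (a,b)) (a+2,b) d12
    have H2 := flip_height_V (symmDiff M (plaqEdges (a,b))) (a+2,b)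
      (c2.2.2.1.mpr m3) (c2.2.2.2.mpr m4)
      (fun hc => n2.1 (c2.1.mp hc)) (fun hc => n2.2 (c2.2.1.mp hc)) _ H1
    have c3a := config_preserved M (plaqEdges (a,b)) (a,b+2) d13
    have c3b := config_preserved (symmDiff M (plaqEdges (a,b))) (plaqEdges (a+2,b)) (a,b+2) d23
    have H3 := flip_height_V (symmDiff (symmDiff M (plaqEdges (a,b))) (plaqEdges (a+2,b)))
      (a,b+2)
      (c3b.2.2.1.mpr (c3a.2.2.1.mpr m5)) (c3b.2.2.2.mpr (c3a.2.2.2.mpr m6))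
      (fun hc => n3.1 (c3a.1.mp (c3b.1.mp hc)))
      (fun hc => n3.2 (c3a.2.1.mp (c3b.2.1.mp hc))) _ H2
    have c4a := config_preserved M (plaqEdges (a,b)) (a+2,b+2) d14
    have c4b := config_preserved (symmDiff M (plaqEdges (a,b))) (plaqEdges (a+2,b)) (a+2,b+2) d24
    have c4c := config_preserved (symmDiff (symmDiff M (plaqEdges (a,b))) (plaqEdges (a+2,b)))
      (plaqEdges (a,b+2)) (a+2,b+2) d34
    have H4 := flip_height_H
      (symmDiff (symmDiff (symmDiff M (plaqEdges (a,b))) (plaqEdges (a+2,b))) (plaqEdges (a,b+2)))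
      (a+2,b+2)
      (c4c.1.mpr (c4b.1.mpr (c4a.1.mpr m7)))
      (c4c.2.1.mpr (c4b.2.1.mpr (c4a.2.1.mpr m8)))
      (fun hc => n4.1 (c4a.2.2.1.mp (c4b.2.2.1.mp (c4c.2.2.1.mp hc))))
      (fun hc => n4.2 (c4a.2.2.2.mp (c4b.2.2.2.mp (c4c.2.2.2.mp hc)))) _ H3
    set h' : V → ℤ := fun x =>
      h x + (if x = ((a,b) : V) then -4 * eps (a,b) else 0)
        + (if x = ((a+2,b) : V) then 4 * eps (a+2,b) else 0)
        + (if x = ((a,b+2) : V) then 4 * eps (a,b+2) else 0)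
        + (if x = ((a+2,b+2) : V) then -4 * eps (a+2,b+2) else 0) with hh'
    have v1 : h' (a,b) - h (a,b) = -4 * eps (a,b) := by
      simp [hh', ne12, ne13, ne14]
    have v2 : h' (a+2,b) - h (a+2,b) = 4 * eps (a,b) := by
      simp [hh', ne12.symm, ne23, ne24, e2]
    have v3 : h' (a,b+2) - h (a,b+2) = 4 * eps (a,b) := by
      simp [hh', ne13.symm, ne23.symm, ne34, e3]
    have v4 : h' (a+2,b+2) - h (a+2,b+2) = -4 * eps (a,b) := by
      simp [hh', ne14.symm, ne24.symm, ne34.symm, e4]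
    have voff : ∀ x : V, x ∉ ({(a,b), (a+2,b), (a,b+2), (a+2,b+2)} : Set V) → h' x = h x := by
      intro x hx
      simp only [Set.mem_insert_iff, Set.mem_singleton_iff, not_or] at hx
      obtain ⟨g1, g2, g3, g4⟩ := hx
      simp [hh', g1, g2, g3, g4]
    have hzero : ∀ x : V, x ∉ ({(a,b), (a+2,b), (a,b+2), (a+2,b+2)} : Set V) →
        h' x - h x = 0 := fun x hx => by rw [voff x hx]; ring
    refine ⟨-4 * eps (a,b), ?_, h', ?_, v1, v4, by rw [v2]; ring, by rw [v3]; ring, voff,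
      ?_, ?_, ?_⟩
    · by_cases hE : Even (a + b) <;> simp [eps, hE]
    · rw [hEq]; exact H4
    · have F := finsum_eq_four (fun _ => 1) (fun x => h' x - h x) (a,b) (a+2,b) (a,b+2)
        (a+2,b+2) ne12 ne13 ne14 ne23 ne24 ne34 hzero
      simp only [one_mul] at F
      refine F.trans ?_
      simp only [v1, v2, v3, v4]
      ring
    · have F := finsum_eq_four (fun x : V => x.1) (fun x => h' x - h x) (a,b) (a+2,b) (a,b+2)
        (a+2,b+2) ne12 ne13 ne14 ne23 ne24 ne34 hzero
      refine F.trans ?_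
      simp only [v1, v2, v3, v4]
      ring
    · have F := finsum_eq_four (fun x : V => x.2) (fun x => h' x - h x) (a,b) (a+2,b) (a,b+2)
        (a+2,b+2) ne12 ne13 ne14 ne23 ne24 ne34 hzero
      refine F.trans ?_
      simp only [v1, v2, v3, v4]
      ring
  · -- V at q1, q4; H at q2, q3
    have n1 := hostsV_not hM m1
    have n2 := hostsH_not hM m3
    have n3 := hostsH_not hM m5
    have n4 := hostsV_not hM m7
    have H1 := flip_height_V M (a,b) m1 m2 n1.1 n1.2 h hh
    have c2 := config_preserved M (plaqEdges (a,b)) (a+2,b) d12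
    have H2 := flip_height_H (symmDiff M (plaqEdges (a,b))) (a+2,b)
      (c2.1.mpr m3) (c2.2.1.mpr m4)
      (fun hc => n2.1 (c2.2.2.1.mp hc)) (fun hc => n2.2 (c2.2.2.2.mp hc)) _ H1
    have c3a := config_preserved M (plaqEdges (a,b)) (a,b+2) d13
    have c3b := config_preserved (symmDiff M (plaqEdges (a,b))) (plaqEdges (a+2,b)) (a,b+2) d23
    have H3 := flip_height_H (symmDiff (symmDiff M (plaqEdges (a,b))) (plaqEdges (a+2,b)))
      (a,b+2)
      (c3b.1.mpr (c3a.1.mpr m5)) (c3b.2.1.mpr (c3a.2.1.mpr m6))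
      (fun hc => n3.1 (c3a.2.2.1.mp (c3b.2.2.1.mp hc)))
      (fun hc => n3.2 (c3a.2.2.2.mp (c3b.2.2.2.mp hc))) _ H2
    have c4a := config_preserved M (plaqEdges (a,b)) (a+2,b+2) d14
    have c4b := config_preserved (symmDiff M (plaqEdges (a,b))) (plaqEdges (a+2,b)) (a+2,b+2) d24
    have c4c := config_preserved (symmDiff (symmDiff M (plaqEdges (a,b))) (plaqEdges (a+2,b)))
      (plaqEdges (a,b+2)) (a+2,b+2) d34
    have H4 := flip_height_V
      (symmDiff (symmDiff (symmDiff M (plaqEdges (a,b))) (plaqEdges (a+2,b))) (plaqEdges (a,b+2)))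
      (a+2,b+2)
      (c4c.2.2.1.mpr (c4b.2.2.1.mpr (c4a.2.2.1.mpr m7)))
      (c4c.2.2.2.mpr (c4b.2.2.2.mpr (c4a.2.2.2.mpr m8)))
      (fun hc => n4.1 (c4a.1.mp (c4b.1.mp (c4c.1.mp hc))))
      (fun hc => n4.2 (c4a.2.1.mp (c4b.2.1.mp (c4c.2.1.mp hc)))) _ H3
    set h' : V → ℤ := fun x =>
      h x + (if x = ((a,b) : V) then 4 * eps (a,b) else 0)
        + (if x = ((a+2,b) : V) then -4 * eps (a+2,b) else 0)
        + (if x = ((a,b+2) : V) then -4 * eps (a,b+2) else 0)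
        + (if x = ((a+2,b+2) : V) then 4 * eps (a+2,b+2) else 0) with hh'
    have v1 : h' (a,b) - h (a,b) = 4 * eps (a,b) := by
      simp [hh', ne12, ne13, ne14]
    have v2 : h' (a+2,b) - h (a+2,b) = -4 * eps (a,b) := by
      simp [hh', ne12.symm, ne23, ne24, e2]
    have v3 : h' (a,b+2) - h (a,b+2) = -4 * eps (a,b) := by
      simp [hh', ne13.symm, ne23.symm, ne34, e3]
    have v4 : h' (a+2,b+2) - h (a+2,b+2) = 4 * eps (a,b) := by
      simp [hh', ne14.symm, ne24.symm, ne34.symm, e4]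
    have voff : ∀ x : V, x ∉ ({(a,b), (a+2,b), (a,b+2), (a+2,b+2)} : Set V) → h' x = h x := by
      intro x hx
      simp only [Set.mem_insert_iff, Set.mem_singleton_iff, not_or] at hx
      obtain ⟨g1, g2, g3, g4⟩ := hx
      simp [hh', g1, g2, g3, g4]
    have hzero : ∀ x : V, x ∉ ({(a,b), (a+2,b), (a,b+2), (a+2,b+2)} : Set V) →
        h' x - h x = 0 := fun x hx => by rw [voff x hx]; ring
    refine ⟨4 * eps (a,b), ?_, h', ?_, v1, v4, by rw [v2]; ring, by rw [v3]; ring, voff,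
      ?_, ?_, ?_⟩
    · by_cases hE : Even (a + b) <;> simp [eps, hE]
    · rw [hEq]; exact H4
    · have F := finsum_eq_four (fun _ => 1) (fun x => h' x - h x) (a,b) (a+2,b) (a,b+2)
        (a+2,b+2) ne12 ne13 ne14 ne23 ne24 ne34 hzero
      simp only [one_mul] at F
      refine F.trans ?_
      simp only [v1, v2, v3, v4]
      ring
    · have F := finsum_eq_four (fun x : V => x.1) (fun x => h' x - h x) (a,b) (a+2,b) (a,b+2)
        (a+2,b+2) ne12 ne13 ne14 ne23 ne24 ne34 hzero
      refine F.trans ?_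
      simp only [v1, v2, v3, v4]
      ring
    · have F := finsum_eq_four (fun x : V => x.2) (fun x => h' x - h x) (a,b) (a+2,b) (a,b+2)
        (a+2,b+2) ne12 ne13 ne14 ne23 ne24 ne34 hzero
      refine F.trans ?_
      simp only [v1, v2, v3, v4]
      ring


end HQDM
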